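/- Let H be a complex Hilbert space, f a bounded operator with ‖f‖ ≤ 1, and 0 < r < 1. Then there exists N ∈ ℕ such that for all n ≥ N, Re((I + r·f) · ∑_{k=0}^{n} (r·f)^k) ≥ 0 (positive semidefinite). -/

import Mathlib

/-!
Write `g = r • f` and `y = ∑_{k ≤ n} g^k x`. Telescoping gives `x = (y - g y) + g^(n+1) x`.
The main term contributes `re ⟪y - g y, y + g y⟫ = ‖y‖² - ‖g y‖² ≥ (1 - r²)‖y‖²`. The error
`g^(n+1) x` has norm at most `r^(n+1)‖x‖`, and `‖x‖ ≤ 4‖y‖` as soon as `r^(n+1)` is small, so it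
costs at most `8 r^(n+1)‖y‖²`, which the main term absorbs for large `n`.
-/

open RCLike

section
variable {𝕜 E : Type*} [RCLike 𝕜] [NormedAddCommGroup E] [InnerProductSpace 𝕜 E]

lemma re_inner_sub_add (a b : E) :
    re (inner 𝕜 (a - b) (a + b)) = ‖a‖ ^ 2 - ‖b‖ ^ 2 := by
  have hab : re (inner 𝕜 a b) = re (inner 𝕜 b a) := by rw [← inner_conj_symm, conj_re]
  simp only [inner_sub_left, inner_add_right, map_add, map_sub, inner_self_eq_norm_sq]
  linarith

lemma re_inner_add_nonneg_of_sub_add {a b u : E} {s ε : ℝ} (hb : ‖b‖ ≤ s * ‖a‖) (hε : 0 ≤ ε)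
    (hεs : 8 * ε ≤ 1 - s ^ 2) (hu : ‖u‖ ≤ ε * ‖a - b + u‖) :
    0 ≤ re (inner 𝕜 (a - b + u) (a + b)) := by
  set x := a - b + u
  have hs : s ≤ 1 := by nlinarith
  have hsa : 0 ≤ s * ‖a‖ := (norm_nonneg b).trans hb
  have hba : ‖b‖ ≤ ‖a‖ := hb.trans (by nlinarith [norm_nonneg a])
  have hb2 : ‖b‖ ^ 2 ≤ s ^ 2 * ‖a‖ ^ 2 := by rw [← mul_pow]; gcongr
  have hab : ‖a + b‖ ≤ 2 * ‖a‖ := by linarith [norm_add_le a b]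
  have hx : ‖x‖ ≤ 4 * ‖a‖ := by
    have : ε * ‖x‖ ≤ ‖x‖ / 8 := by nlinarith [norm_nonneg x]
    linarith [norm_add_le (a - b) u, norm_sub_le a b, norm_nonneg a]
  have hux : |re (inner 𝕜 u (a + b))| ≤ 8 * ε * ‖a‖ ^ 2 :=
    calc |re (inner 𝕜 u (a + b))| ≤ ‖u‖ * ‖a + b‖ :=
          (abs_re_le_norm _).trans (norm_inner_le_norm _ _)
      _ ≤ (ε * (4 * ‖a‖)) * (2 * ‖a‖) := by gcongr; exact hu.trans (by gcongr)
      _ = 8 * ε * ‖a‖ ^ 2 := by ring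
  rw [inner_add_left, map_add, re_inner_sub_add]
  nlinarith [abs_le.mp hux, sq_nonneg ‖a‖]

end

lemma geom_sum_apply_sub_apply_add_pow_apply {𝕜 E : Type*} [NontriviallyNormedField 𝕜]
    [NormedAddCommGroup E] [NormedSpace 𝕜 E] (g : E →L[𝕜] E) (n : ℕ) (x : E) :
    (∑ k ∈ Finset.range n, g ^ k) x - g ((∑ k ∈ Finset.range n, g ^ k) x) + (g ^ n) x = x := by
  have h := congrArg (· x) (mul_neg_geom_sum g n)
  simp only [mul_apply_eq_comp, sub_apply, one_apply_eq_self] at h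
  rw [h, sub_add_cancel]

theorem stmt12_general {H : Type*} [NormedAddCommGroup H] [InnerProductSpace ℂ H]
    (f : H →L[ℂ] H) (hf : ‖f‖ ≤ 1) (r : ℝ) (hr0 : 0 < r) (hr1 : r < 1) :
    ∃ N : ℕ, ∀ n ≥ N, ∀ x : H,
      0 ≤ (inner ℂ x ((((1 : H →L[ℂ] H) + (r : ℂ) • f) *
        ∑ k ∈ Finset.range (n + 1), ((r : ℂ) • f) ^ k) x) : ℂ).re := by
  set g := (r : ℂ) • f
  have hg : ‖g‖ ≤ r := by
    rw [norm_smul, Complex.norm_real, Real.norm_of_nonneg hr0.le]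
    exact mul_le_of_le_one_right hr0.le hf
  obtain ⟨N, hN⟩ := exists_pow_lt_of_lt_one (by nlinarith : 0 < (1 - r ^ 2) / 8) hr1
  refine ⟨N, fun n hn x => ?_⟩
  have hrn : 8 * r ^ (n + 1) ≤ 1 - r ^ 2 := by
    have := pow_le_pow_of_le_one hr0.le hr1.le (by omega : N ≤ n + 1)
    linarith
  have hgn : ‖(g ^ (n + 1)) x‖ ≤ r ^ (n + 1) * ‖x‖ :=
    (g ^ (n + 1)).le_of_opNorm_le
      ((norm_pow_le' g n.succ_pos).trans (pow_le_pow_left₀ (norm_nonneg g) hg _)) x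
  have hx := geom_sum_apply_sub_apply_add_pow_apply g (n + 1) x
  set y := (∑ k ∈ Finset.range (n + 1), g ^ k) x
  have key := re_inner_add_nonneg_of_sub_add (𝕜 := ℂ) (g.le_of_opNorm_le hg y) (by positivity) hrn
    (by rwa [hx])
  rw [mul_apply_eq_comp, add_apply, one_apply_eq_self]
  rwa [hx] at key

/-- For a contraction `f` and `0 < r < 1`, eventually the partial Cayley sums
`(I + r·f)·∑_{k=0}^{n}(r·f)^k` have positive semidefinite real part. -/
theorem stmt12 {H : Type*} [NormedAddCommGroup H] [InnerProductSpace ℂ H] [CompleteSpace H]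
    (f : H →L[ℂ] H) (hf : ‖f‖ ≤ 1) (r : ℝ) (hr0 : 0 < r) (hr1 : r < 1) :
    ∃ N : ℕ, ∀ n ≥ N, ∀ x : H,
      0 ≤ (inner ℂ x ((((1 : H →L[ℂ] H) + (r : ℂ) • f) *
        ∑ k ∈ Finset.range (n + 1), ((r : ℂ) • f) ^ k) x) : ℂ).re :=
  stmt12_general f hf r hr0 hr1
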